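/- For every p ≥ 1 and every n ≥ 2, and any real random variables X₁,...,Xₙ, one has (E[max_i |Xᵢ|^p])^{1/p} ≤ 2 max_i (E[|Xᵢ|^{p·ℓ}])^{1/(p·ℓ)}, where ℓ = log₂ n. -/

import Mathlib

/-!
Pointwise, the largest of the `|Xᵢ|^p` is at most `(∑ᵢ |Xᵢ|^{pℓ})^{1/ℓ}`. Since `x ↦ x^{1/ℓ}` is
concave for `ℓ ≥ 1`, Jensen's inequality bounds the expectation of the right-hand side by
`(∑ᵢ E|Xᵢ|^{pℓ})^{1/ℓ} ≤ n^{1/ℓ} M^p`, where `M` is the largest `pℓ`-th moment norm. The choice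
`ℓ = log₂ n` makes `n^{1/ℓ} = 2`, and `2^{1/p} ≤ 2` absorbs the final `p`-th root.
-/

open MeasureTheory

namespace Real

lemma rpow_le_one_add {x r : ℝ} (hx : 0 ≤ x) (hr₀ : 0 ≤ r) (hr₁ : r ≤ 1) : x ^ r ≤ 1 + x := by
  rcases le_or_gt x 1 with hx1 | hx1
  · linarith [rpow_le_one hx hx1 hr₀]
  · linarith [rpow_le_self_of_one_le hx1.le hr₁]

lemma rpow_inv_logb {b x : ℝ} (hb : 0 < b) (hx : 0 < x) (hx1 : x ≠ 1) : x ^ (logb b x)⁻¹ = b := by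
  rw [inv_logb, rpow_logb hx hx1 hb]

lemma iSup_rpow_le_sum_rpow {ι : Type*} [Fintype ι] [Nonempty ι] {a : ι → ℝ} (ha : ∀ i, 0 ≤ a i)
    (q : ℝ) : (⨆ i, a i) ^ q ≤ ∑ i, a i ^ q := by
  obtain ⟨j, hj⟩ := Finite.exists_max a
  have hsup : ⨆ i, a i = a j := le_antisymm (ciSup_le hj) (le_ciSup (Finite.bddAbove_range a) j)
  rw [hsup]
  exact Finset.single_le_sum (fun i _ => rpow_nonneg (ha i) q) (Finset.mem_univ j)

lemma le_iSup_rpow_one_div_rpow {ι : Type*} [Finite ι] {b : ι → ℝ} (hb : ∀ i, 0 ≤ b i) {q : ℝ}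
    (hq : 0 < q) (i : ι) : b i ≤ (⨆ j, b j ^ (1 / q)) ^ q := by
  calc b i = (b i ^ (1 / q)) ^ q := by rw [← rpow_mul (hb i), one_div_mul_cancel hq.ne', rpow_one]
    _ ≤ (⨆ j, b j ^ (1 / q)) ^ q :=
      rpow_le_rpow (rpow_nonneg (hb i) _)
        (le_ciSup (Finite.bddAbove_range fun j => b j ^ (1 / q)) i) hq.le

lemma sum_le_card_mul_iSup_rpow_one_div_rpow {ι : Type*} [Fintype ι] {b : ι → ℝ}
    (hb : ∀ i, 0 ≤ b i) {q : ℝ} (hq : 0 < q) :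
    ∑ i, b i ≤ Fintype.card ι * (⨆ j, b j ^ (1 / q)) ^ q := by
  simpa using Finset.sum_le_sum fun i (_ : i ∈ Finset.univ) => le_iSup_rpow_one_div_rpow hb hq i

lemma rpow_one_div_le_mul {I M c p : ℝ} (hI : 0 ≤ I) (hM : 0 ≤ M) (hc : 1 ≤ c) (hp : 1 ≤ p)
    (h : I ≤ c * M ^ p) : I ^ (1 / p) ≤ c * M := by
  have hp₀ : 0 < p := by linarith
  calc I ^ (1 / p) ≤ (c * M ^ p) ^ (1 / p) := rpow_le_rpow hI h (by positivity)
    _ = c ^ (1 / p) * M := by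
      rw [mul_rpow (by linarith) (by positivity), ← rpow_mul hM, mul_one_div_cancel hp₀.ne',
        rpow_one]
    _ ≤ c * M := by
      gcongr
      exact rpow_le_self_of_one_le hc ((div_le_one hp₀).2 hp)

end Real

namespace MeasureTheory

variable {Ω : Type*} [MeasurableSpace Ω] {μ : Measure Ω} {f : Ω → ℝ} {r : ℝ}

lemma Integrable.rpow_of_le_one [IsFiniteMeasure μ] (hf : Integrable f μ)
    (hf₀ : ∀ ω, 0 ≤ f ω) (hr₀ : 0 ≤ r) (hr₁ : r ≤ 1) : Integrable (fun ω => f ω ^ r) μ := by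
  refine ((integrable_const 1).add hf).mono
    ((Real.continuous_rpow_const hr₀).comp_aestronglyMeasurable hf.1) (ae_of_all _ fun ω => ?_)
  rw [Real.norm_of_nonneg (Real.rpow_nonneg (hf₀ ω) r), Pi.add_apply,
    Real.norm_of_nonneg (by linarith [hf₀ ω])]
  exact Real.rpow_le_one_add (hf₀ ω) hr₀ hr₁

lemma integral_rpow_le_rpow_integral [IsProbabilityMeasure μ] (hf : Integrable f μ)
    (hf₀ : ∀ ω, 0 ≤ f ω) (hr₀ : 0 ≤ r) (hr₁ : r ≤ 1) :
    ∫ ω, f ω ^ r ∂μ ≤ (∫ ω, f ω ∂μ) ^ r :=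
  (Real.concaveOn_rpow hr₀ hr₁).le_map_integral (Real.continuous_rpow_const hr₀).continuousOn
    isClosed_Ici (ae_of_all _ hf₀) hf (hf.rpow_of_le_one hf₀ hr₀ hr₁)

lemma integral_iSup_rpow_le {ι : Type*} [Fintype ι] [Nonempty ι] [IsProbabilityMeasure μ]
    {f : ι → Ω → ℝ} (hf₀ : ∀ i ω, 0 ≤ f i ω) {p ℓ : ℝ} (hp : 0 < p) (hℓ : 1 ≤ ℓ)
    (hf : ∀ i, Integrable (fun ω => f i ω ^ (p * ℓ)) μ) :
    ∫ ω, (⨆ i, f i ω) ^ p ∂μ ≤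
      Fintype.card ι ^ ℓ⁻¹ * (⨆ i, (∫ ω, f i ω ^ (p * ℓ) ∂μ) ^ (1 / (p * ℓ))) ^ p := by
  have hℓ₀ : 0 < ℓ := by linarith
  have hq₀ : 0 < p * ℓ := mul_pos hp hℓ₀
  set S : Ω → ℝ := fun ω => ∑ i, f i ω ^ (p * ℓ)
  have hS₀ : ∀ ω, 0 ≤ S ω := fun ω => Finset.sum_nonneg fun i _ => Real.rpow_nonneg (hf₀ i ω) _
  have hS : Integrable S μ := integrable_finsetSum _ fun i _ => hf i
  have hsup₀ : ∀ ω, 0 ≤ ⨆ i, f i ω := fun ω => Real.iSup_nonneg fun i => hf₀ i ω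
  set M := ⨆ i, (∫ ω, f i ω ^ (p * ℓ) ∂μ) ^ (1 / (p * ℓ))
  have hM₀ : 0 ≤ M := Real.iSup_nonneg fun i =>
    Real.rpow_nonneg (integral_nonneg fun ω => Real.rpow_nonneg (hf₀ i ω) _) _
  have hmax_le : ∀ ω, (⨆ i, f i ω) ^ p ≤ S ω ^ ℓ⁻¹ := fun ω => by
    rw [← mul_inv_cancel_right₀ hℓ₀.ne' p, Real.rpow_mul (hsup₀ ω)]
    exact Real.rpow_le_rpow (Real.rpow_nonneg (hsup₀ ω) _)
      (Real.iSup_rpow_le_sum_rpow (hf₀ · ω) _) (inv_nonneg.2 hℓ₀.le)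
  have hES : ∫ ω, S ω ∂μ ≤ Fintype.card ι * M ^ (p * ℓ) := by
    rw [integral_finsetSum _ fun i _ => hf i]
    exact Real.sum_le_card_mul_iSup_rpow_one_div_rpow
      (fun i => integral_nonneg fun ω => Real.rpow_nonneg (hf₀ i ω) _) hq₀
  have hℓ_inv : ℓ⁻¹ ≤ 1 := inv_le_one_of_one_le₀ hℓ
  calc ∫ ω, (⨆ i, f i ω) ^ p ∂μ ≤ ∫ ω, S ω ^ ℓ⁻¹ ∂μ :=
        integral_mono_of_nonneg (ae_of_all _ fun ω => Real.rpow_nonneg (hsup₀ ω) p)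
          (hS.rpow_of_le_one hS₀ (inv_nonneg.2 hℓ₀.le) hℓ_inv) (ae_of_all _ hmax_le)
    _ ≤ (∫ ω, S ω ∂μ) ^ ℓ⁻¹ := integral_rpow_le_rpow_integral hS hS₀ (inv_nonneg.2 hℓ₀.le) hℓ_inv
    _ ≤ (Fintype.card ι * M ^ (p * ℓ)) ^ ℓ⁻¹ :=
        Real.rpow_le_rpow (integral_nonneg hS₀) hES (inv_nonneg.2 hℓ₀.le)
    _ = Fintype.card ι ^ ℓ⁻¹ * M ^ p := by
      rw [Real.mul_rpow (Nat.cast_nonneg _) (Real.rpow_nonneg hM₀ _), ← Real.rpow_mul hM₀,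
        mul_inv_cancel_right₀ hℓ₀.ne' p]

end MeasureTheory

theorem stmt1_general {Ω : Type*} [MeasurableSpace Ω] (μ : Measure Ω) [IsProbabilityMeasure μ]
    (p : ℝ) (hp : 1 ≤ p) (n : ℕ) (hn : 2 ≤ n) (X : Fin n → Ω → ℝ)
    (ℓ : ℝ) (hℓ : ℓ = Real.logb 2 n)
    (hint : ∀ i, Integrable (fun ω => |X i ω| ^ (p * ℓ)) μ) :
    (∫ ω, (⨆ i, |X i ω|) ^ p ∂μ) ^ (1 / p) ≤
      2 * ⨆ i, (∫ ω, |X i ω| ^ (p * ℓ) ∂μ) ^ (1 / (p * ℓ)) := by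
  have hn₁ : (1 : ℝ) < n := by exact_mod_cast hn
  have hℓ₁ : 1 ≤ ℓ := by
    rw [hℓ, Real.le_logb_iff_rpow_le one_lt_two (by linarith), Real.rpow_one]
    exact_mod_cast hn
  have hn_rpow : (n : ℝ) ^ ℓ⁻¹ = 2 := by rw [hℓ, Real.rpow_inv_logb two_pos (by linarith) hn₁.ne']
  have : Nonempty (Fin n) := ⟨⟨0, by omega⟩⟩
  have hmoment := integral_iSup_rpow_le (μ := μ) (fun i ω => abs_nonneg (X i ω))
    (by linarith) hℓ₁ hint
  rw [Fintype.card_fin, hn_rpow] at hmoment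
  exact Real.rpow_one_div_le_mul
    (integral_nonneg fun ω => Real.rpow_nonneg (Real.iSup_nonneg fun i => abs_nonneg _) p)
    (Real.iSup_nonneg fun i => Real.rpow_nonneg (integral_nonneg fun ω => by positivity) _)
    one_le_two hp hmoment

theorem stmt1 {Ω : Type*} [MeasurableSpace Ω] (μ : Measure Ω) [IsProbabilityMeasure μ]
    (p : ℝ) (hp : 1 ≤ p) (n : ℕ) (hn : 2 ≤ n) (X : Fin n → Ω → ℝ)
    (ℓ : ℝ) (hℓ : ℓ = Real.logb 2 n)
    (hint : ∀ i, Integrable (fun ω => |X i ω| ^ (p * ℓ)) μ)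
    (hmax : Integrable (fun ω => (⨆ i, |X i ω|) ^ p) μ) :
    (∫ ω, (⨆ i, |X i ω|) ^ p ∂μ) ^ (1 / p) ≤
      2 * ⨆ i, (∫ ω, |X i ω| ^ (p * ℓ) ∂μ) ^ (1 / (p * ℓ)) :=
  stmt1_general μ p hp n hn X ℓ hℓ hint
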